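/- arXiv:2604.18754 — 2 statements merged into one kernel-verified Lean document; each statement's English description precedes it below -/
import Mathlib

section
/- For a simple undirected graph G with |E| ≥ 1, the expectation ⟨G|^⊗3 P_△ |G⟩^⊗3 equals κ_3 / (8|E|³), where κ_3 is the number of triangles in G and P_△ = Σ_{i<j<k} (|i⟩|j⟩|j⟩|k⟩|k⟩|i⟩)(⟨i|⟨j|⟨j|⟨k|⟨k|⟨i|). -/
lemma sorted_triple_inj {N : ℕ} {a b c a' b' c' : Fin N} (h1 : a < b) (h2 : b < c)
    (h1' : a' < b') (h2' : b' < c')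
    (h : ({a, b, c} : Finset (Fin N)) = {a', b', c'}) : a = a' ∧ b = b' ∧ c = c' := by
  have m1 : a ∈ ({a', b', c'} : Finset (Fin N)) := by rw [← h]; simp
  have m2 : b ∈ ({a', b', c'} : Finset (Fin N)) := by rw [← h]; simp
  have m3 : c ∈ ({a', b', c'} : Finset (Fin N)) := by rw [← h]; simp
  have m4 : a' ∈ ({a, b, c} : Finset (Fin N)) := by rw [h]; simp
  have m5 : b' ∈ ({a, b, c} : Finset (Fin N)) := by rw [h]; simp
  have m6 : c' ∈ ({a, b, c} : Finset (Fin N)) := by rw [h]; simp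
  simp only [Finset.mem_insert, Finset.mem_singleton, Fin.ext_iff] at m1 m2 m3 m4 m5 m6 ⊢
  rw [Fin.lt_def] at h1 h2 h1' h2'
  omega

lemma exists_sorted_triple {N : ℕ} (x y z : Fin N) (hxy : x ≠ y) (hxz : x ≠ z) (hyz : y ≠ z) :
    ∃ a b c : Fin N, a < b ∧ b < c ∧ ({x, y, z} : Finset (Fin N)) = {a, b, c} := by
  rcases lt_trichotomy x y with h | h | h
  · rcases lt_trichotomy y z with h' | h' | h'
    · exact ⟨x, y, z, h, h', rfl⟩
    · exact absurd h' (by simp [hyz])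
    · rcases lt_trichotomy x z with h'' | h'' | h''
      · exact ⟨x, z, y, h'', h', by ext w; simp; tauto⟩
      · exact absurd h'' (by simp [hxz])
      · exact ⟨z, x, y, h'', h, by ext w; simp; tauto⟩
  · exact absurd h hxy
  · rcases lt_trichotomy x z with h' | h' | h'
    · exact ⟨y, x, z, h, h', by ext w; simp; tauto⟩
    · exact absurd h' hxz
    · rcases lt_trichotomy y z with h'' | h'' | h''
      · exact ⟨y, z, x, h'', h', by ext w; simp; tauto⟩
      · exact absurd h'' hyz
      · exact ⟨z, y, x, h'', h, by ext w; simp; tauto⟩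

lemma tri_card_aux (N : ℕ) (G : SimpleGraph (Fin N)) [DecidableRel G.Adj] :
    ((Finset.univ : Finset (Fin N × Fin N × Fin N)).filter
      (fun t => (t.1 < t.2.1 ∧ t.2.1 < t.2.2) ∧
        (G.Adj t.1 t.2.1 ∧ G.Adj t.2.1 t.2.2 ∧ G.Adj t.2.2 t.1))).card
    = (G.cliqueFinset 3).card := by
  classical
  apply Finset.card_bij (fun t _ => ({t.1, t.2.1, t.2.2} : Finset (Fin N)))
  · intro t ht
    simp only [Finset.mem_filter] at ht
    rw [SimpleGraph.mem_cliqueFinset_iff, SimpleGraph.is3Clique_triple_iff]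
    exact ⟨ht.2.2.1, ht.2.2.2.2.symm, ht.2.2.2.1⟩
  · intro t1 h1 t2 h2 heq
    simp only [Finset.mem_filter] at h1 h2
    obtain ⟨e1, e2, e3⟩ := sorted_triple_inj h1.2.1.1 h1.2.1.2 h2.2.1.1 h2.2.1.2 heq
    exact Prod.ext e1 (Prod.ext e2 e3)
  · intro s hs
    rw [SimpleGraph.mem_cliqueFinset_iff] at hs
    obtain ⟨x, y, z, hxy, hxz, hyz, rfl⟩ := Finset.card_eq_three.mp hs.card_eq
    obtain ⟨a, b, c, hab, hbc, heq⟩ := exists_sorted_triple x y z hxy hxz hyz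
    rw [heq] at hs
    rw [SimpleGraph.is3Clique_triple_iff] at hs
    refine ⟨(a, b, c), ?_, heq.symm⟩
    simp only [Finset.mem_filter, Finset.mem_univ, true_and]
    exact ⟨⟨hab, hbc⟩, hs.1, hs.2.2, hs.2.1.symm⟩

/-- `⟨G|^⊗3 P_△ |G⟩^⊗3 = κ₃ / (8|E|³)`, where `κ₃` is the number of
triangles of `G` and `P_△ = Σ_{i<j<k} |ijjkki⟩⟨ijjkki|` acts on `(C^N)^⊗6`. -/
theorem triangle_count_expectation (N : ℕ) (G : SimpleGraph (Fin N))
    [DecidableRel G.Adj] (hE : 1 ≤ G.edgeFinset.card)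
    (ψ : (Fin N × Fin N × Fin N × Fin N × Fin N × Fin N) → ℂ)
    (hψ : ∀ p, ψ p = ((Real.sqrt (2 * G.edgeFinset.card))⁻¹ : ℂ) ^ 3 *
      (G.adjMatrix ℂ p.1 p.2.1 * G.adjMatrix ℂ p.2.2.1 p.2.2.2.1 *
        G.adjMatrix ℂ p.2.2.2.2.1 p.2.2.2.2.2))
    (P : Matrix (Fin N × Fin N × Fin N × Fin N × Fin N × Fin N)
               (Fin N × Fin N × Fin N × Fin N × Fin N × Fin N) ℂ)
    (hP : P = ∑ t ∈ (Finset.univ : Finset (Fin N × Fin N × Fin N)).filter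
        (fun t => t.1 < t.2.1 ∧ t.2.1 < t.2.2),
      Matrix.single (t.1, t.2.1, t.2.1, t.2.2, t.2.2, t.1)
        (t.1, t.2.1, t.2.1, t.2.2, t.2.2, t.1) (1 : ℂ)) :
    dotProduct (star ψ) (P.mulVec ψ) =
      ((G.cliqueFinset 3).card : ℂ) / (8 * (G.edgeFinset.card : ℂ) ^ 3) := by
  classical
  set E := G.edgeFinset.card with hEdef
  set s := (Finset.univ : Finset (Fin N × Fin N × Fin N)).filter
      (fun t => t.1 < t.2.1 ∧ t.2.1 < t.2.2) with hs
  set a : Fin N × Fin N × Fin N → Fin N × Fin N × Fin N × Fin N × Fin N × Fin N :=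
    fun t => (t.1, t.2.1, t.2.1, t.2.2, t.2.2, t.1) with ha
  have hP' : P = ∑ t ∈ s, Matrix.single (a t) (a t) (1 : ℂ) := hP
  -- Step 1: expand the quadratic form
  have expand : dotProduct (star ψ) (P.mulVec ψ)
      = ∑ t ∈ s, star (ψ (a t)) * ψ (a t) := by
    rw [hP']
    have h1 : (∑ t ∈ s, Matrix.single (a t) (a t) (1:ℂ)).mulVec ψ
        = ∑ t ∈ s, (Matrix.single (a t) (a t) (1:ℂ)).mulVec ψ := by
      ext x
      simp only [Matrix.mulVec, dotProduct, Matrix.sum_apply, Finset.sum_mul,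
        Finset.sum_apply]
      exact Finset.sum_comm
    rw [h1]
    simp only [dotProduct, Finset.sum_apply, Finset.mul_sum]
    rw [Finset.sum_comm]
    refine Finset.sum_congr rfl fun t _ => ?_
    simp [Matrix.mulVec, dotProduct, Matrix.single, ite_and]
  rw [expand]
  -- Step 2: per-term computation
  set C : ℂ := ((Real.sqrt (2 * E))⁻¹ : ℂ) ^ 3 with hC
  have hCC : star C * C = (8 * (E : ℂ) ^ 3)⁻¹ := by
    have hstar : star C = C := by
      simp [hC, ← Complex.ofReal_inv, ← Complex.ofReal_pow]
    have h2 : ((Real.sqrt (2 * E) : ℝ) : ℂ) ^ 2 = 2 * (E : ℂ) := by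
      rw [← Complex.ofReal_pow,
        Real.sq_sqrt (mul_nonneg (by norm_num) (Nat.cast_nonneg E))]
      push_cast; ring
    rw [hstar, hC]
    have : (((Real.sqrt (2 * E) : ℝ) : ℂ))⁻¹ ^ 3 * (((Real.sqrt (2 * E) : ℝ) : ℂ))⁻¹ ^ 3
        = ((((Real.sqrt (2 * E) : ℝ) : ℂ)) ^ 2)⁻¹ ^ 3 := by
      ring
    rw [this, h2]
    ring
  have term : ∀ i j k : Fin N, star (ψ (i, j, j, k, k, i)) * ψ (i, j, j, k, k, i)
      = (8 * (E : ℂ) ^ 3)⁻¹ *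
        (if G.Adj i j ∧ G.Adj j k ∧ G.Adj k i then 1 else 0) := by
    intro i j k
    rw [hψ (i, j, j, k, k, i)]
    simp only [SimpleGraph.adjMatrix_apply]
    by_cases h1 : G.Adj i j
    · by_cases h2 : G.Adj j k
      · by_cases h3 : G.Adj k i
        · rw [if_pos h1, if_pos h2, if_pos h3, if_pos ⟨h1, h2, h3⟩]
          rw [mul_one, mul_one, mul_one, mul_one]
          exact hCC
        · rw [if_neg h3, if_neg (by tauto : ¬(G.Adj i j ∧ G.Adj j k ∧ G.Adj k i))]
          simp [← hC]
      · rw [if_neg h2, if_neg (by tauto : ¬(G.Adj i j ∧ G.Adj j k ∧ G.Adj k i))]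
        simp [← hC]
    · rw [if_neg h1, if_neg (by tauto : ¬(G.Adj i j ∧ G.Adj j k ∧ G.Adj k i))]
      simp [← hC]
  rw [Finset.sum_congr rfl (fun t _ => term t.1 t.2.1 t.2.2), ← Finset.mul_sum,
    Finset.sum_boole, hs, Finset.filter_filter]
  rw [tri_card_aux N G]
  rw [div_eq_inv_mul]
end

section
/- For a simple undirected graph G with |E| ≥ 1, the expectation ⟨G|^⊗C(m,2) P_{K_m} |G⟩^⊗C(m,2) equals κ_m / (2|E|)^{C(m,2)}, where κ_m is the number of m-cliques in G and P_{K_m} = Σ_{S ⊆ [N], |S|=m} |E_S⟩⟨E_S| with |E_S⟩ = ⊗_{(u,v) ∈ E_S} |u⟩|v⟩ the ordered edge-list basis vector of the clique on S. -/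
private lemma dot_mulVec_sum {n β : Type*} [Fintype n] [DecidableEq β] (v w : n → ℂ)
    (s : Finset β) (M : β → Matrix n n ℂ) :
    dotProduct v ((∑ t ∈ s, M t).mulVec w) =
      ∑ t ∈ s, dotProduct v ((M t).mulVec w) := by
  have h1 : (∑ t ∈ s, M t).mulVec w = ∑ t ∈ s, (M t).mulVec w := by
    ext k
    simp only [Matrix.mulVec, dotProduct, Matrix.sum_apply, Finset.sum_apply,
      Finset.sum_mul]
    exact Finset.sum_comm
  rw [h1]
  simp only [dotProduct, Finset.sum_apply, Finset.mul_sum]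
  exact Finset.sum_comm

private lemma clique_iff_pairs {N m : ℕ} (G : SimpleGraph (Fin N)) [DecidableRel G.Adj]
    (d : Fin N) (S : Finset (Fin N)) (hS : S.card = m) :
    G.IsNClique m S ↔ ∀ e : {e : Fin m × Fin m // e.1 < e.2},
      G.Adj ((S.sort (· ≤ ·)).getD e.1.1 d) ((S.sort (· ≤ ·)).getD e.1.2 d) := by
  set L := S.sort (· ≤ ·) with hL
  have hlen : L.length = m := by rw [hL, Finset.length_sort, hS]
  have hget : ∀ i : Fin m, L.getD i d = L.get (Fin.cast hlen.symm i) := by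
    intro i
    rw [List.getD_eq_getElem L d (by rw [hlen]; exact i.isLt)]
    simp [List.get_eq_getElem]
  have hmono : StrictMono fun i : Fin m => L.getD i d := by
    intro i j hij
    show L.getD i d < L.getD j d
    rw [hget i, hget j]
    exact (Finset.sortedLT_sort S).strictMono_get (by simpa using hij)
  have hmem : ∀ i : Fin m, L.getD i d ∈ S := by
    intro i
    rw [hget i]
    have : L.get (Fin.cast hlen.symm i) ∈ L := List.get_mem _ _
    rwa [Finset.mem_sort] at this
  constructor
  · rintro ⟨hc, -⟩ ⟨⟨i, j⟩, hij⟩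
    exact hc (hmem i) (hmem j) (hmono hij).ne
  · intro h
    refine ⟨?_, hS⟩
    intro u hu v hv huv
    obtain ⟨i, hi⟩ : ∃ i : Fin m, L.getD i d = u := by
      have : u ∈ L := by rwa [hL, Finset.mem_sort]
      obtain ⟨k, hk⟩ := List.get_of_mem this
      exact ⟨Fin.cast hlen k, by rw [hget]; simpa using hk⟩
    obtain ⟨j, hj⟩ : ∃ j : Fin m, L.getD j d = v := by
      have : v ∈ L := by rwa [hL, Finset.mem_sort]
      obtain ⟨k, hk⟩ := List.get_of_mem this
      exact ⟨Fin.cast hlen k, by rw [hget]; simpa using hk⟩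
    rcases lt_trichotomy i j with hij | hij | hij
    · rw [← hi, ← hj]; exact h ⟨(i, j), hij⟩
    · exact absurd (by rw [← hi, ← hj, hij]) huv
    · rw [← hi, ← hj]; exact (h ⟨(j, i), hij⟩).symm

/-- `⟨G|^⊗C(m,2) P_{K_m} |G⟩^⊗C(m,2) = κ_m / (2|E|)^{C(m,2)}`, where
`κ_m` is the number of `m`-cliques of `G` and `P_{K_m} = Σ_{|S|=m} |E_S⟩⟨E_S|`, with
`|E_S⟩` the ordered edge-list basis vector of the clique on `S` (edge positions are
indexed by pairs `e₁ < e₂` in `Fin m`, mapped through the increasing enumeration of `S`). -/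
theorem clique_count_expectation (N m : ℕ) (hm : 2 ≤ m) (hmN : m ≤ N)
    (G : SimpleGraph (Fin N)) [DecidableRel G.Adj] (hE : 1 ≤ G.edgeFinset.card)
    (d : Fin N)
    (b : Finset (Fin N) → ({e : Fin m × Fin m // e.1 < e.2} → Fin N × Fin N))
    (hb : ∀ S : Finset (Fin N), ∀ e, b S e =
      ((S.sort (· ≤ ·)).getD e.1.1 d, (S.sort (· ≤ ·)).getD e.1.2 d))
    (ψ : ({e : Fin m × Fin m // e.1 < e.2} → Fin N × Fin N) → ℂ)
    (hψ : ∀ f, ψ f = ((Real.sqrt (2 * G.edgeFinset.card))⁻¹ : ℂ) ^ (m.choose 2) *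
      ∏ e : {e : Fin m × Fin m // e.1 < e.2}, G.adjMatrix ℂ (f e).1 (f e).2)
    (P : Matrix ({e : Fin m × Fin m // e.1 < e.2} → Fin N × Fin N)
               ({e : Fin m × Fin m // e.1 < e.2} → Fin N × Fin N) ℂ)
    (hP : P = ∑ S ∈ Finset.powersetCard m (Finset.univ : Finset (Fin N)),
      Matrix.single (b S) (b S) (1 : ℂ)) :
    dotProduct (star ψ) (P.mulVec ψ) =
      ((G.cliqueFinset m).card : ℂ) / ((2 * (G.edgeFinset.card : ℂ)) ^ (m.choose 2)) := by
  have hEpos : (0:ℝ) < 2 * G.edgeFinset.card := by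
    have : (1:ℝ) ≤ (G.edgeFinset.card : ℝ) := by exact_mod_cast hE
    nlinarith
  set C := m.choose 2 with hC
  set z : ℂ := ((Real.sqrt (2 * G.edgeFinset.card))⁻¹ : ℂ) ^ C with hz
  have hval : ∀ S ∈ Finset.powersetCard m (Finset.univ : Finset (Fin N)),
      ψ (b S) = if S ∈ G.cliqueFinset m then z else 0 := by
    intro S hSmem
    have hS : S.card = m := (Finset.mem_powersetCard.mp hSmem).2
    rw [hψ]
    have hprod : (∏ e : {e : Fin m × Fin m // e.1 < e.2},
        G.adjMatrix ℂ ((b S) e).1 ((b S) e).2) =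
        if S ∈ G.cliqueFinset m then 1 else 0 := by
      by_cases hclique : S ∈ G.cliqueFinset m
      · rw [if_pos hclique]
        have hadj := (clique_iff_pairs G d S hS).mp
          (SimpleGraph.mem_cliqueFinset_iff.mp hclique)
        refine Finset.prod_eq_one fun e _ => ?_
        rw [hb S e, SimpleGraph.adjMatrix_apply]
        exact if_pos (hadj e)
      · rw [if_neg hclique]
        have : ¬ ∀ e : {e : Fin m × Fin m // e.1 < e.2},
            G.Adj ((S.sort (· ≤ ·)).getD e.1.1 d) ((S.sort (· ≤ ·)).getD e.1.2 d) := by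
          intro h
          exact hclique (SimpleGraph.mem_cliqueFinset_iff.mpr
            ((clique_iff_pairs G d S hS).mpr h))
        push_neg at this
        obtain ⟨e, he⟩ := this
        refine Finset.prod_eq_zero (Finset.mem_univ e) ?_
        rw [hb S e, SimpleGraph.adjMatrix_apply]
        exact if_neg he
    rw [hprod]
    split <;> simp [hz]
  have hstarz : star z * z = ((2 * (G.edgeFinset.card : ℂ)) ^ C)⁻¹ := by
    have hzr : star z = z := by
      rw [hz, ← Complex.ofReal_inv, ← Complex.ofReal_pow, Complex.star_def,
        Complex.conj_ofReal]
    rw [hzr, hz, ← mul_pow, ← mul_inv, ← Complex.ofReal_mul,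
      Real.mul_self_sqrt hEpos.le, inv_pow]
    norm_num
  rw [hP, dot_mulVec_sum]
  have hterm : ∀ S ∈ Finset.powersetCard m (Finset.univ : Finset (Fin N)),
      dotProduct (star ψ) ((Matrix.single (b S) (b S) (1:ℂ)).mulVec ψ) =
      if S ∈ G.cliqueFinset m then ((2 * (G.edgeFinset.card : ℂ)) ^ C)⁻¹ else 0 := by
    intro S hSmem
    rw [Matrix.single_mulVec, one_mul]
    have hup : dotProduct (star ψ) (Function.update 0 (b S) (ψ (b S)))
        = star (ψ (b S)) * ψ (b S) := by
      rw [dotProduct]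
      rw [Finset.sum_eq_single (b S)]
      · rw [Function.update_self, Pi.star_apply]
      · intro k _ hk
        rw [Function.update_of_ne hk, Pi.zero_apply, mul_zero]
      · intro h; exact absurd (Finset.mem_univ _) h
    rw [hup, hval S hSmem]
    split
    · exact hstarz
    · simp
  rw [Finset.sum_congr rfl hterm]
  rw [Finset.sum_ite_mem]
  have hsub : Finset.powersetCard m (Finset.univ : Finset (Fin N)) ∩ G.cliqueFinset m
      = G.cliqueFinset m := by
    apply Finset.inter_eq_right.mpr
    intro S hS
    rw [Finset.mem_powersetCard]
    exact ⟨Finset.subset_univ S, (SimpleGraph.mem_cliqueFinset_iff.mp hS).2⟩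
  rw [hsub, Finset.sum_const, nsmul_eq_mul, div_eq_mul_inv]
end
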